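/- For all integers 2 ≤ k ≤ n, the k-local search Hamiltonian with target 0^{n+1} on n+1 qubits decomposes exactly as H_{n+1,k,0} = ((n+1−k)/(n+1))·(I₂ ⊗ H_{n,k,0}) + (k/(n+1))·(σ_{z+} ⊗ H_{n,k−1,0}), where the first Kronecker factor corresponds to the added qubit, I₂ is the 2×2 identity, and σ_{z+} = [[1,0],[0,0]]. -/

import Mathlib

open Matrix Finset Kronecker

/-- Number of positions where `x` is `0` (agreement with the target `0^n`). -/
def agreeZero {n : ℕ} (x : Fin n → Fin 2) : ℕ :=
  (Finset.univ.filter (fun j => x j = 0)).card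

/-- The `k`-local search Hamiltonian with target `0^n` on `n` qubits. -/
noncomputable def Hsearch0 (n k : ℕ) :
    Matrix (Fin n → Fin 2) (Fin n → Fin 2) ℂ :=
  Matrix.diagonal (fun x => ((agreeZero x).choose k : ℂ) / (n.choose k : ℂ))

/-- The `k`-local search Hamiltonian with target `0^{n+1}` on `n+1` qubits, with the basis
state written `(x₀, x')` where `x₀` is the added qubit. -/
noncomputable def Hsearch0' (n k : ℕ) :
    Matrix (Fin 2 × (Fin n → Fin 2)) (Fin 2 × (Fin n → Fin 2)) ℂ :=
  Matrix.diagonal (fun p =>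
    (((if p.1 = 0 then 1 else 0) + agreeZero p.2).choose k : ℂ) / ((n + 1).choose k : ℂ))

/-- `σ_{z+} = [[1,0],[0,0]]`, the projection onto `|0⟩`. -/
noncomputable def sigmaZP : Matrix (Fin 2) (Fin 2) ℂ := !![1, 0; 0, 0]

/-! Both sides are diagonal, so the identity is checked on a basis state `(x₀, x')` whose last
`n` qubits contain `d` zeros. For `x₀ = 0`, Pascal's rule `C(d+1,k) = C(d,k) + C(d,k-1)` splits
the entry into two terms; the normalisations are then matched by
`C(n,k)·(n+1) = C(n+1,k)·(n+1-k)` and `C(n+1,k)·k = (n+1)·C(n,k-1)`. -/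

section ChooseRatio

variable {K : Type*} [Field K] [CharZero K]

theorem div_choose_succ_eq_mul_div_choose {n k : ℕ} (hkn : k ≤ n) (a : K) :
    a / ((n + 1).choose k : K) = ((n + 1 - k) / (n + 1)) * (a / (n.choose k : K)) := by
  have hmul : (n.choose k : K) * (n + 1) = ((n + 1).choose k : K) * (n + 1 - k) := by
    have := congrArg (Nat.cast : ℕ → K) (Nat.choose_mul_succ_eq n k)
    push_cast [Nat.cast_sub (show k ≤ n + 1 by omega)] at this
    exact this
  have hc : (n.choose k : K) ≠ 0 := by exact_mod_cast (Nat.choose_pos hkn).ne'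
  have hc' : ((n + 1).choose k : K) ≠ 0 := by exact_mod_cast (Nat.choose_pos (by omega)).ne'
  have hn : (n : K) + 1 ≠ 0 := Nat.cast_add_one_ne_zero n
  field_simp
  linear_combination a * hmul

theorem div_choose_succ_succ_eq_mul_div_choose (n k : ℕ) (a : K) :
    a / ((n + 1).choose (k + 1) : K) = ((k + 1) / (n + 1)) * (a / (n.choose k : K)) := by
  have habsorb : ((n + 1).choose (k + 1) : K) * (k + 1) = (n + 1) * n.choose k := by
    exact_mod_cast congrArg (Nat.cast : ℕ → K) (Nat.add_one_mul_choose_eq n k).symm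
  rcases lt_or_ge n k with hnk | hkn
  · simp [Nat.choose_eq_zero_of_lt hnk, Nat.choose_eq_zero_of_lt (Nat.succ_lt_succ hnk)]
  have hc : (n.choose k : K) ≠ 0 := by exact_mod_cast (Nat.choose_pos hkn).ne'
  have hc' : ((n + 1).choose (k + 1) : K) ≠ 0 := by
    exact_mod_cast (Nat.choose_pos (Nat.succ_le_succ hkn)).ne'
  have hn : (n : K) + 1 ≠ 0 := Nat.cast_add_one_ne_zero n
  field_simp
  linear_combination (-a) * habsorb

theorem choose_div_choose_succ {d n : ℕ} (hdn : d ≤ n) (k : ℕ) :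
    (d.choose k : K) / ((n + 1).choose k : K)
      = ((n + 1 - k) / (n + 1)) * ((d.choose k : K) / (n.choose k : K)) := by
  rcases le_or_gt k n with hkn | hnk
  · exact div_choose_succ_eq_mul_div_choose hkn _
  · simp [Nat.choose_eq_zero_of_lt (hdn.trans_lt hnk)]

theorem succ_choose_div_choose_succ {d n : ℕ} (hdn : d ≤ n) (k : ℕ) :
    ((d + 1).choose k : K) / ((n + 1).choose k : K)
      = ((n + 1 - k) / (n + 1)) * ((d.choose k : K) / (n.choose k : K))
        + (k / (n + 1)) * ((d.choose (k - 1) : K) / (n.choose (k - 1) : K)) := by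
  rcases k with _ | k
  · simp [div_self (Nat.cast_add_one_ne_zero n : (n : K) + 1 ≠ 0)]
  rw [Nat.choose_succ_succ', Nat.cast_add, add_div, add_comm, choose_div_choose_succ hdn,
    div_choose_succ_succ_eq_mul_div_choose]
  push_cast
  ring

end ChooseRatio

theorem agreeZero_le {n : ℕ} (x : Fin n → Fin 2) : agreeZero x ≤ n :=
  (card_filter_le _ _).trans (by simp)

theorem sigmaZP_eq_diagonal : sigmaZP = diagonal ![1, 0] := by
  ext i j
  fin_cases i <;> fin_cases j <;> rfl

theorem Hsearch_succ_decomposition_general (n k : ℕ) :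
    Hsearch0' n k
      = ((((n : ℂ) + 1 - (k : ℂ)) / ((n : ℂ) + 1)) •
          ((1 : Matrix (Fin 2) (Fin 2) ℂ) ⊗ₖ Hsearch0 n k)) +
        (((k : ℂ) / ((n : ℂ) + 1)) • (sigmaZP ⊗ₖ Hsearch0 n (k - 1))) := by
  rw [sigmaZP_eq_diagonal, ← diagonal_one, Hsearch0, Hsearch0, diagonal_kronecker_diagonal,
    diagonal_kronecker_diagonal, ← diagonal_smul, ← diagonal_smul, diagonal_add, Hsearch0']
  congr 1
  ext ⟨b, x⟩
  fin_cases b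
  · simpa [add_comm 1] using succ_choose_div_choose_succ (agreeZero_le x) k
  · simpa using choose_div_choose_succ (agreeZero_le x) k

/-- Exact decomposition of the `k`-local search Hamiltonian on `n+1` qubits:
`H_{n+1,k,0} = ((n+1−k)/(n+1))·(I₂ ⊗ H_{n,k,0}) + (k/(n+1))·(σ_{z+} ⊗ H_{n,k−1,0})`. -/
theorem Hsearch_succ_decomposition (n k : ℕ) (hk : 2 ≤ k) (hkn : k ≤ n) :
    Hsearch0' n k
      = ((((n : ℂ) + 1 - (k : ℂ)) / ((n : ℂ) + 1)) •
          ((1 : Matrix (Fin 2) (Fin 2) ℂ) ⊗ₖ Hsearch0 n k)) +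
        (((k : ℂ) / ((n : ℂ) + 1)) • (sigmaZP ⊗ₖ Hsearch0 n (k - 1))) :=
  Hsearch_succ_decomposition_general n k
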